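/- Two compatible spark complexes have naturally isomorphic groups of spark classes in every degree. -/

import Mathlib

/-!
Both spark complexes are subspark complexes of the ambient complex `(F̄, E, Ī)`, modelled as
`(⊤, E, Ī)`, and the map on spark classes induced by each inclusion is an isomorphism; the
required isomorphism is the first of these followed by the inverse of the second.
Injectivity: if a spark `a` with `da = φ - r` is trivial in `F̄`, then `φ` lies in `E ∩ Ī`
and vanishes by axiom (B), and the isomorphisms `H(F) ≅ H(F̄)` and `H(I) ≅ H(Ī)` make `a`
trivial in `F`. Surjectivity: `H(I) ≅ H(Ī)` replaces `r` by a cocycle of `I`, after which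
`H(F) ≅ H(F̄)` moves the spark into `F` without changing its class in `F̄`.
-/

section SparkMachinery

variable (Fb : ℤ → Type) [∀ k, AddCommGroup (Fb k)]
  (d : ∀ k : ℤ, Fb k →+ Fb (k + 1))
  (E Fs I : ∀ k : ℤ, AddSubgroup (Fb k))

/-- The sparks of degree `k+1` of the spark complex `(Fs, E, I)` sitting inside
the ambient complex `F̄`: elements `a ∈ Fs^{k+1}` with `da = φ - r`,
`φ ∈ E^{k+2}`, `r ∈ I^{k+2}`. -/
def sparkSet (k : ℤ) : AddSubgroup (Fb (k + 1)) where
  carrier := {a | a ∈ Fs (k + 1) ∧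
    ∃ φ ∈ E (k + 1 + 1), ∃ r ∈ I (k + 1 + 1), d (k + 1) a = φ - r}
  zero_mem' := ⟨(Fs _).zero_mem, 0, (E _).zero_mem, 0, (I _).zero_mem, by simp⟩
  add_mem' := by
    rintro a b ⟨haF, φ, hφ, r, hr, ha⟩ ⟨hbF, ψ, hψ, t, ht, hb⟩
    exact ⟨(Fs _).add_mem haF hbF, φ + ψ, (E _).add_mem hφ hψ, r + t,
      (I _).add_mem hr ht, by simp only [map_add, ha, hb]; abel⟩
  neg_mem' := by
    rintro a ⟨haF, φ, hφ, r, hr, ha⟩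
    exact ⟨(Fs _).neg_mem haF, -φ, (E _).neg_mem hφ, -r, (I _).neg_mem hr, by
      simp only [map_neg, ha]; abel⟩

/-- The trivial sparks `db + s`, `b ∈ Fs^k`, `s ∈ I^{k+1}`. -/
def trivSet (k : ℤ) : AddSubgroup (Fb (k + 1)) where
  carrier := {a | ∃ b ∈ Fs k, ∃ s ∈ I (k + 1), a = d k b + s}
  zero_mem' := ⟨0, (Fs _).zero_mem, 0, (I _).zero_mem, by simp⟩
  add_mem' := by
    rintro a b ⟨c, hc, s, hs, ha⟩ ⟨c', hc', s', hs', hb⟩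
    exact ⟨c + c', (Fs _).add_mem hc hc', s + s', (I _).add_mem hs hs', by
      simp only [ha, hb, map_add]; abel⟩
  neg_mem' := by
    rintro a ⟨c, hc, s, hs, ha⟩
    exact ⟨-c, (Fs _).neg_mem hc, -s, (I _).neg_mem hs, by
      simp only [ha, map_neg]; abel⟩

/-- The group of spark classes of degree `k+1` of the spark complex
`(Fs, E, I)`. -/
def ClassGrp (k : ℤ) :=
  sparkSet Fb d E Fs I k ⧸
    (trivSet Fb d Fs I k).addSubgroupOf (sparkSet Fb d E Fs I k)

instance (k : ℤ) : AddCommGroup (ClassGrp Fb d E Fs I k) :=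
  QuotientAddGroup.Quotient.addCommGroup _

end SparkMachinery

section SparkComparison

variable {Fb : ℤ → Type} [∀ k, AddCommGroup (Fb k)] {d : ∀ k : ℤ, Fb k →+ Fb (k + 1)}
  {E Ib Fs I : ∀ k : ℤ, AddSubgroup (Fb k)}

variable (d) in
structure InducesCohomologyIso (A G : ∀ k : ℤ, AddSubgroup (Fb k)) : Prop where
  injective : ∀ (j : ℤ) (x : Fb (j + 1)), x ∈ A (j + 1) → d (j + 1) x = 0 →
    (∃ y ∈ G j, d j y = x) → ∃ y ∈ A j, d j y = x
  surjective : ∀ (j : ℤ) (x : Fb (j + 1)), x ∈ G (j + 1) → d (j + 1) x = 0 →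
    ∃ e ∈ A (j + 1), d (j + 1) e = 0 ∧ ∃ y ∈ G j, x - e = d j y

lemma inducesCohomologyIso_top
    (hinj : ∀ (j : ℤ) (x : Fb (j + 1)), x ∈ Fs (j + 1) → d (j + 1) x = 0 →
      (∃ y : Fb j, d j y = x) → ∃ y ∈ Fs j, d j y = x)
    (hsurj : ∀ (j : ℤ) (x : Fb (j + 1)), d (j + 1) x = 0 →
      ∃ e ∈ Fs (j + 1), d (j + 1) e = 0 ∧ ∃ y : Fb j, x - e = d j y) :
    InducesCohomologyIso d Fs fun _ => ⊤ where
  injective j x hx hdx := fun ⟨y, _, hy⟩ => hinj j x hx hdx ⟨y, hy⟩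
  surjective j x _ hdx :=
    let ⟨e, he, hde, y, hy⟩ := hsurj j x hdx
    ⟨e, he, hde, y, AddSubgroup.mem_top y, hy⟩

/-- Vanishing of the relative cohomology of `A ⊆ G`. -/
lemma InducesCohomologyIso.exists_sub_eq_d {A G : ∀ k : ℤ, AddSubgroup (Fb k)}
    (h : InducesCohomologyIso d A G) (hdd : ∀ (k : ℤ) (x : Fb k), d (k + 1) (d k x) = 0)
    (hAG : ∀ k, A k ≤ G k) {k : ℤ} {x : Fb (k + 1)} (hx : x ∈ G (k + 1))
    (hdx : d (k + 1) x ∈ A (k + 1 + 1)) :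
    ∃ x' ∈ A (k + 1), d (k + 1) x' = d (k + 1) x ∧ ∃ c ∈ G k, x - x' = d k c := by
  obtain ⟨y, hyA, hy⟩ := h.injective (k + 1) _ hdx (hdd _ x) ⟨x, hx, rfl⟩
  have hxy : d (k + 1) (x - y) = 0 := by rw [map_sub, hy, sub_self]
  obtain ⟨e, heA, hde, c, hcG, hc⟩ :=
    h.surjective k (x - y) ((G _).sub_mem hx (hAG _ hyA)) hxy
  refine ⟨y + e, (A _).add_mem hyA heA, by rw [map_add, hy, hde, add_zero], c, hcG, ?_⟩
  rw [← hc]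
  abel

lemma sparkSet_le_sparkSet_top (hIIb : ∀ k, I k ≤ Ib k) (k : ℤ) :
    sparkSet Fb d E Fs I k ≤ sparkSet Fb d E (fun _ => ⊤) Ib k := by
  rintro a ⟨-, φ, hφ, r, hr, ha⟩
  exact ⟨AddSubgroup.mem_top a, φ, hφ, r, hIIb _ hr, ha⟩

lemma mem_trivSet_of_mem_trivSet_top (hdd : ∀ (k : ℤ) (x : Fb k), d (k + 1) (d k x) = 0)
    (hIFs : ∀ k, I k ≤ Fs k) (hIIb : ∀ k, I k ≤ Ib k)
    (hdIb : ∀ (k : ℤ) (x : Fb k), x ∈ Ib k → d k x ∈ Ib (k + 1))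
    (hB : ∀ j : ℤ, 1 ≤ j → ∀ x : Fb j, x ∈ E j → x ∈ Ib j → x = 0)
    (hF : InducesCohomologyIso d Fs fun _ => ⊤) (hI : InducesCohomologyIso d I Ib)
    {k : ℤ} (hk : -1 ≤ k) {a : Fb (k + 1)} (ha : a ∈ sparkSet Fb d E Fs I k)
    (htriv : a ∈ trivSet Fb d (fun _ => ⊤) Ib k) : a ∈ trivSet Fb d Fs I k := by
  obtain ⟨haFs, φ, hφE, r, hrI, hda⟩ := ha
  obtain ⟨b, -, s, hsIb, rfl⟩ := htriv
  have hds : d (k + 1) (d k b + s) = d (k + 1) s := by rw [map_add, hdd, zero_add]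
  -- `φ = ds + r` lies in `E ∩ Ī`, so it vanishes
  have hφ : φ = 0 := by
    refine hB _ (by omega) φ hφE ?_
    rw [show φ = d (k + 1) s + r by rw [← hds, hda]; abel]
    exact (Ib _).add_mem (hdIb _ _ hsIb) (hIIb _ hrI)
  have hdsI : d (k + 1) s ∈ I (k + 1 + 1) := by
    rw [← hds, hda, hφ, zero_sub]
    exact (I _).neg_mem hrI
  obtain ⟨u, huI, -, w, -, hw⟩ := hI.exists_sub_eq_d hdd hIIb hsIb hdsI
  have hexact : d k (b + w) = d k b + s - u := by rw [map_add, ← hw]; abel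
  obtain ⟨b', hb'Fs, hb'⟩ := hF.injective k (d k b + s - u) ((Fs _).sub_mem haFs (hIFs _ huI))
    (by rw [← hexact, hdd]) ⟨b + w, AddSubgroup.mem_top _, hexact⟩
  exact ⟨b', hb'Fs, u, huI, by rw [hb']; abel⟩

lemma exists_sub_mem_trivSet_top (hdd : ∀ (k : ℤ) (x : Fb k), d (k + 1) (d k x) = 0)
    (hEFs : ∀ k, E k ≤ Fs k) (hIFs : ∀ k, I k ≤ Fs k)
    (hdE : ∀ (k : ℤ) (x : Fb k), x ∈ E k → d k x ∈ E (k + 1))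
    (hdIb : ∀ (k : ℤ) (x : Fb k), x ∈ Ib k → d k x ∈ Ib (k + 1))
    (hB : ∀ j : ℤ, 1 ≤ j → ∀ x : Fb j, x ∈ E j → x ∈ Ib j → x = 0)
    (hF : InducesCohomologyIso d Fs fun _ => ⊤) (hI : InducesCohomologyIso d I Ib)
    {k : ℤ} (hk : -2 ≤ k) {a : Fb (k + 1)} (ha : a ∈ sparkSet Fb d E (fun _ => ⊤) Ib k) :
    ∃ a' ∈ sparkSet Fb d E Fs I k, -a' + a ∈ trivSet Fb d (fun _ => ⊤) Ib k := by
  obtain ⟨-, φ, hφE, r, hrIb, hda⟩ := ha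
  have hdφ : d (k + 1 + 1) φ = d (k + 1 + 1) r := by
    rw [← sub_eq_zero, ← map_sub, ← hda, hdd]
  -- `dφ = dr` lies in `E ∩ Ī`, so `r` is a cocycle of `Ī`
  have hdr : d (k + 1 + 1) r = 0 := by
    rw [← hdφ]
    exact hB _ (by omega) _ (hdE _ _ hφE) (hdφ ▸ hdIb _ _ hrIb)
  obtain ⟨r', hr'I, hdr', y, hyIb, hy⟩ := hI.surjective (k + 1) r hrIb hdr
  have hday : d (k + 1) (a + y) = φ - r' := by rw [map_add, hda, ← hy]; abel
  have hdayFs : d (k + 1) (a + y) ∈ Fs (k + 1 + 1) := by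
    rw [hday]
    exact (Fs _).sub_mem (hEFs _ hφE) (hIFs _ hr'I)
  obtain ⟨a', ha'Fs, hda', c, -, hc⟩ :=
    hF.exists_sub_eq_d hdd (fun _ => le_top) (AddSubgroup.mem_top _) hdayFs
  refine ⟨a', ⟨ha'Fs, φ, hφE, r', hr'I, hda'.trans hday⟩, c, AddSubgroup.mem_top _, -y,
    (Ib _).neg_mem hyIb, ?_⟩
  rw [← hc]
  abel

namespace ClassGrp

variable (d E Fs) in
def toAmbient (hIIb : ∀ k, I k ≤ Ib k) (k : ℤ) :
    ClassGrp Fb d E Fs I k →+ ClassGrp Fb d E (fun _ => ⊤) Ib k :=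
  QuotientAddGroup.map _ _ (AddSubgroup.inclusion (sparkSet_le_sparkSet_top hIIb k)) <| by
    intro _ h
    rw [AddSubgroup.mem_addSubgroupOf] at h
    obtain ⟨b, -, s, hs, hab⟩ := h
    rw [AddSubgroup.mem_comap, AddSubgroup.mem_addSubgroupOf]
    exact ⟨b, AddSubgroup.mem_top b, s, hIIb _ hs, hab⟩

lemma mk_eq_mk_top_iff {k : ℤ} {a b : Fb (k + 1)}
    (ha : a ∈ sparkSet Fb d E (fun _ => ⊤) Ib k) (hb : b ∈ sparkSet Fb d E (fun _ => ⊤) Ib k) :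
    (QuotientAddGroup.mk ⟨a, ha⟩ : ClassGrp Fb d E (fun _ => ⊤) Ib k) =
        QuotientAddGroup.mk ⟨b, hb⟩ ↔
      ∃ c : Fb k, ∃ s ∈ Ib (k + 1), a - b = d k c + s := by
  refine QuotientAddGroup.eq.trans ?_
  rw [AddSubgroup.mem_addSubgroupOf]
  constructor
  · rintro ⟨c, -, s, hs, h⟩
    refine ⟨-c, -s, (Ib _).neg_mem hs, ?_⟩
    rw [map_neg, ← neg_add, ← show -a + b = d k c + s from h]
    abel
  · rintro ⟨c, s, hs, h⟩
    refine ⟨-c, AddSubgroup.mem_top _, -s, (Ib _).neg_mem hs, ?_⟩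
    change -a + b = d k (-c) + -s
    rw [map_neg, ← neg_add, ← h]
    abel

lemma toAmbient_injective (hdd : ∀ (k : ℤ) (x : Fb k), d (k + 1) (d k x) = 0)
    (hIFs : ∀ k, I k ≤ Fs k) (hIIb : ∀ k, I k ≤ Ib k)
    (hdIb : ∀ (k : ℤ) (x : Fb k), x ∈ Ib k → d k x ∈ Ib (k + 1))
    (hB : ∀ j : ℤ, 1 ≤ j → ∀ x : Fb j, x ∈ E j → x ∈ Ib j → x = 0)
    (hF : InducesCohomologyIso d Fs fun _ => ⊤) (hI : InducesCohomologyIso d I Ib)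
    {k : ℤ} (hk : -1 ≤ k) : Function.Injective (toAmbient d E Fs hIIb k) := by
  rw [injective_iff_map_eq_zero]
  intro q hq
  induction q using QuotientAddGroup.induction_on with
  | H a =>
    obtain ⟨a, ha⟩ := a
    have htriv := AddSubgroup.mem_addSubgroupOf.mp ((QuotientAddGroup.eq_zero_iff _).mp hq)
    exact (QuotientAddGroup.eq_zero_iff _).mpr (AddSubgroup.mem_addSubgroupOf.mpr
      (mem_trivSet_of_mem_trivSet_top hdd hIFs hIIb hdIb hB hF hI hk ha htriv))

lemma toAmbient_surjective (hdd : ∀ (k : ℤ) (x : Fb k), d (k + 1) (d k x) = 0)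
    (hEFs : ∀ k, E k ≤ Fs k) (hIFs : ∀ k, I k ≤ Fs k) (hIIb : ∀ k, I k ≤ Ib k)
    (hdE : ∀ (k : ℤ) (x : Fb k), x ∈ E k → d k x ∈ E (k + 1))
    (hdIb : ∀ (k : ℤ) (x : Fb k), x ∈ Ib k → d k x ∈ Ib (k + 1))
    (hB : ∀ j : ℤ, 1 ≤ j → ∀ x : Fb j, x ∈ E j → x ∈ Ib j → x = 0)
    (hF : InducesCohomologyIso d Fs fun _ => ⊤) (hI : InducesCohomologyIso d I Ib)
    {k : ℤ} (hk : -2 ≤ k) : Function.Surjective (toAmbient d E Fs hIIb k) := by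
  intro q
  induction q using QuotientAddGroup.induction_on with
  | H a =>
    obtain ⟨a, ha⟩ := a
    obtain ⟨a', ha', htriv⟩ := exists_sub_mem_trivSet_top hdd hEFs hIFs hdE hdIb hB hF hI hk ha
    exact ⟨QuotientAddGroup.mk ⟨a', ha'⟩,
      QuotientAddGroup.eq.mpr (AddSubgroup.mem_addSubgroupOf.mpr htriv)⟩

lemma toAmbient_bijective (hdd : ∀ (k : ℤ) (x : Fb k), d (k + 1) (d k x) = 0)
    (hEFs : ∀ k, E k ≤ Fs k) (hIFs : ∀ k, I k ≤ Fs k) (hIIb : ∀ k, I k ≤ Ib k)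
    (hdE : ∀ (k : ℤ) (x : Fb k), x ∈ E k → d k x ∈ E (k + 1))
    (hdIb : ∀ (k : ℤ) (x : Fb k), x ∈ Ib k → d k x ∈ Ib (k + 1))
    (hB : ∀ j : ℤ, 1 ≤ j → ∀ x : Fb j, x ∈ E j → x ∈ Ib j → x = 0)
    (hF : InducesCohomologyIso d Fs fun _ => ⊤) (hI : InducesCohomologyIso d I Ib)
    {k : ℤ} (hk : -1 ≤ k) : Function.Bijective (toAmbient d E Fs hIIb k) :=
  ⟨toAmbient_injective hdd hIFs hIIb hdIb hB hF hI hk,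
    toAmbient_surjective hdd hEFs hIFs hIIb hdE hdIb hB hF hI (by omega)⟩

end ClassGrp

end SparkComparison

theorem stmt_12_general
    (Fb : ℤ → Type) [∀ k, AddCommGroup (Fb k)]
    (d : ∀ k : ℤ, Fb k →+ Fb (k + 1))
    (hdd : ∀ (k : ℤ) (x : Fb k), d (k + 1) (d k x) = 0)
    (E Ib Fs1 I1 Fs2 I2 : ∀ k : ℤ, AddSubgroup (Fb k))
    -- containments
    (hEFs1 : ∀ k, E k ≤ Fs1 k) (hIFs1 : ∀ k, I1 k ≤ Fs1 k)
    (hEFs2 : ∀ k, E k ≤ Fs2 k) (hIFs2 : ∀ k, I2 k ≤ Fs2 k)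
    (hI1Ib : ∀ k, I1 k ≤ Ib k) (hI2Ib : ∀ k, I2 k ≤ Ib k)
    -- closure under the differential
    (hdE : ∀ (k : ℤ) (x : Fb k), x ∈ E k → d k x ∈ E (k + 1))
    (hdIb : ∀ (k : ℤ) (x : Fb k), x ∈ Ib k → d k x ∈ Ib (k + 1))
    -- Axiom (B) for the ambient complex (hence for both subcomplexes)
    (hB : ∀ j : ℤ, 1 ≤ j → ∀ x : Fb j, x ∈ E j → x ∈ Ib j → x = 0)
    -- `H^*(F₁) ≅ H^*(F̄)` and `H^*(F₂) ≅ H^*(F̄)` via the inclusions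
    (hF1inj : ∀ (j : ℤ) (x : Fb (j + 1)), x ∈ Fs1 (j + 1) → d (j + 1) x = 0 →
      (∃ y : Fb j, d j y = x) → ∃ y ∈ Fs1 j, d j y = x)
    (hF1surj : ∀ (j : ℤ) (x : Fb (j + 1)), d (j + 1) x = 0 →
      ∃ e ∈ Fs1 (j + 1), d (j + 1) e = 0 ∧ ∃ y : Fb j, x - e = d j y)
    (hF2inj : ∀ (j : ℤ) (x : Fb (j + 1)), x ∈ Fs2 (j + 1) → d (j + 1) x = 0 →
      (∃ y : Fb j, d j y = x) → ∃ y ∈ Fs2 j, d j y = x)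
    (hF2surj : ∀ (j : ℤ) (x : Fb (j + 1)), d (j + 1) x = 0 →
      ∃ e ∈ Fs2 (j + 1), d (j + 1) e = 0 ∧ ∃ y : Fb j, x - e = d j y)
    -- `H^*(I₁) ≅ H^*(Ī)` and `H^*(I₂) ≅ H^*(Ī)` via the inclusions
    (hI1inj : ∀ (j : ℤ) (x : Fb (j + 1)), x ∈ I1 (j + 1) → d (j + 1) x = 0 →
      (∃ y ∈ Ib j, d j y = x) → ∃ y ∈ I1 j, d j y = x)
    (hI1surj : ∀ (j : ℤ) (x : Fb (j + 1)), x ∈ Ib (j + 1) → d (j + 1) x = 0 →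
      ∃ e ∈ I1 (j + 1), d (j + 1) e = 0 ∧ ∃ y ∈ Ib j, x - e = d j y)
    (hI2inj : ∀ (j : ℤ) (x : Fb (j + 1)), x ∈ I2 (j + 1) → d (j + 1) x = 0 →
      (∃ y ∈ Ib j, d j y = x) → ∃ y ∈ I2 j, d j y = x)
    (hI2surj : ∀ (j : ℤ) (x : Fb (j + 1)), x ∈ Ib (j + 1) → d (j + 1) x = 0 →
      ∃ e ∈ I2 (j + 1), d (j + 1) e = 0 ∧ ∃ y ∈ Ib j, x - e = d j y)
    (k : ℤ) (hk : -1 ≤ k) :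
    ∃ e : ClassGrp Fb d E Fs1 I1 k ≃+ ClassGrp Fb d E Fs2 I2 k,
      ∀ (a : Fb (k + 1)) (h1 : a ∈ sparkSet Fb d E Fs1 I1 k)
        (b : Fb (k + 1)) (h2 : b ∈ sparkSet Fb d E Fs2 I2 k),
        (e (QuotientAddGroup.mk ⟨a, h1⟩) = QuotientAddGroup.mk ⟨b, h2⟩ ↔
          ∃ c : Fb k, ∃ s ∈ Ib (k + 1), a - b = d k c + s) := by
  have hbij1 := ClassGrp.toAmbient_bijective hdd hEFs1 hIFs1 hI1Ib hdE hdIb hB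
    (inducesCohomologyIso_top hF1inj hF1surj) ⟨hI1inj, hI1surj⟩ hk
  have hbij2 := ClassGrp.toAmbient_bijective hdd hEFs2 hIFs2 hI2Ib hdE hdIb hB
    (inducesCohomologyIso_top hF2inj hF2surj) ⟨hI2inj, hI2surj⟩ hk
  -- both sides of the equivalence are equalities of classes in the ambient complex
  exact ⟨(AddEquiv.ofBijective _ hbij1).trans (AddEquiv.ofBijective _ hbij2).symm,
    fun a h1 b h2 => (AddEquiv.symm_apply_eq (AddEquiv.ofBijective _ hbij2)).trans
      (ClassGrp.mk_eq_mk_top_iff (sparkSet_le_sparkSet_top hI1Ib k h1)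
        (sparkSet_le_sparkSet_top hI2Ib k h2))⟩

/-- Two compatible spark complexes — spark complexes
`(F₁, E, I₁)` and `(F₂, E, I₂)` embedded as subspark complexes of a common
spark complex `(F̄, E, Ī)` — have naturally isomorphic groups of spark classes
in every degree, the isomorphism matching classes that are equivalent in the
ambient complex. -/
theorem stmt_12
    (Fb : ℤ → Type) [∀ k, AddCommGroup (Fb k)]
    (d : ∀ k : ℤ, Fb k →+ Fb (k + 1))
    (hdd : ∀ (k : ℤ) (x : Fb k), d (k + 1) (d k x) = 0)
    (E Ib Fs1 I1 Fs2 I2 : ∀ k : ℤ, AddSubgroup (Fb k))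
    -- containments
    (hEFs1 : ∀ k, E k ≤ Fs1 k) (hIFs1 : ∀ k, I1 k ≤ Fs1 k)
    (hEFs2 : ∀ k, E k ≤ Fs2 k) (hIFs2 : ∀ k, I2 k ≤ Fs2 k)
    (hI1Ib : ∀ k, I1 k ≤ Ib k) (hI2Ib : ∀ k, I2 k ≤ Ib k)
    -- closure under the differential
    (hdE : ∀ (k : ℤ) (x : Fb k), x ∈ E k → d k x ∈ E (k + 1))
    (hdIb : ∀ (k : ℤ) (x : Fb k), x ∈ Ib k → d k x ∈ Ib (k + 1))
    (hdFs1 : ∀ (k : ℤ) (x : Fb k), x ∈ Fs1 k → d k x ∈ Fs1 (k + 1))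
    (hdI1 : ∀ (k : ℤ) (x : Fb k), x ∈ I1 k → d k x ∈ I1 (k + 1))
    (hdFs2 : ∀ (k : ℤ) (x : Fb k), x ∈ Fs2 k → d k x ∈ Fs2 (k + 1))
    (hdI2 : ∀ (k : ℤ) (x : Fb k), x ∈ I2 k → d k x ∈ I2 (k + 1))
    -- Axiom (A): `E → F̄` induces an isomorphism on cohomology
    (hAinj : ∀ (j : ℤ) (e : Fb (j + 1)), e ∈ E (j + 1) → d (j + 1) e = 0 →
      (∃ y : Fb j, d j y = e) → ∃ y ∈ E j, d j y = e)
    (hAsurj : ∀ (j : ℤ) (x : Fb (j + 1)), d (j + 1) x = 0 →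
      ∃ e ∈ E (j + 1), d (j + 1) e = 0 ∧ ∃ y : Fb j, x - e = d j y)
    -- Axiom (B) for the ambient complex (hence for both subcomplexes)
    (hB : ∀ j : ℤ, 1 ≤ j → ∀ x : Fb j, x ∈ E j → x ∈ Ib j → x = 0)
    -- `H^*(F₁) ≅ H^*(F̄)` and `H^*(F₂) ≅ H^*(F̄)` via the inclusions
    (hF1inj : ∀ (j : ℤ) (x : Fb (j + 1)), x ∈ Fs1 (j + 1) → d (j + 1) x = 0 →
      (∃ y : Fb j, d j y = x) → ∃ y ∈ Fs1 j, d j y = x)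
    (hF1surj : ∀ (j : ℤ) (x : Fb (j + 1)), d (j + 1) x = 0 →
      ∃ e ∈ Fs1 (j + 1), d (j + 1) e = 0 ∧ ∃ y : Fb j, x - e = d j y)
    (hF2inj : ∀ (j : ℤ) (x : Fb (j + 1)), x ∈ Fs2 (j + 1) → d (j + 1) x = 0 →
      (∃ y : Fb j, d j y = x) → ∃ y ∈ Fs2 j, d j y = x)
    (hF2surj : ∀ (j : ℤ) (x : Fb (j + 1)), d (j + 1) x = 0 →
      ∃ e ∈ Fs2 (j + 1), d (j + 1) e = 0 ∧ ∃ y : Fb j, x - e = d j y)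
    -- `H^*(I₁) ≅ H^*(Ī)` and `H^*(I₂) ≅ H^*(Ī)` via the inclusions
    (hI1inj : ∀ (j : ℤ) (x : Fb (j + 1)), x ∈ I1 (j + 1) → d (j + 1) x = 0 →
      (∃ y ∈ Ib j, d j y = x) → ∃ y ∈ I1 j, d j y = x)
    (hI1surj : ∀ (j : ℤ) (x : Fb (j + 1)), x ∈ Ib (j + 1) → d (j + 1) x = 0 →
      ∃ e ∈ I1 (j + 1), d (j + 1) e = 0 ∧ ∃ y ∈ Ib j, x - e = d j y)
    (hI2inj : ∀ (j : ℤ) (x : Fb (j + 1)), x ∈ I2 (j + 1) → d (j + 1) x = 0 →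
      (∃ y ∈ Ib j, d j y = x) → ∃ y ∈ I2 j, d j y = x)
    (hI2surj : ∀ (j : ℤ) (x : Fb (j + 1)), x ∈ Ib (j + 1) → d (j + 1) x = 0 →
      ∃ e ∈ I2 (j + 1), d (j + 1) e = 0 ∧ ∃ y ∈ Ib j, x - e = d j y)
    (k : ℤ) (hk : -1 ≤ k) :
    ∃ e : ClassGrp Fb d E Fs1 I1 k ≃+ ClassGrp Fb d E Fs2 I2 k,
      ∀ (a : Fb (k + 1)) (h1 : a ∈ sparkSet Fb d E Fs1 I1 k)
        (b : Fb (k + 1)) (h2 : b ∈ sparkSet Fb d E Fs2 I2 k),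
        (e (QuotientAddGroup.mk ⟨a, h1⟩) = QuotientAddGroup.mk ⟨b, h2⟩ ↔
          ∃ c : Fb k, ∃ s ∈ Ib (k + 1), a - b = d k c + s) :=
  stmt_12_general Fb d hdd E Ib Fs1 I1 Fs2 I2 hEFs1 hIFs1 hEFs2 hIFs2 hI1Ib hI2Ib hdE hdIb hB hF1inj
    hF1surj hF2inj hF2surj hI1inj hI1surj hI2inj hI2surj k hk
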